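/- The operators H = -2ih, E = (i/2)(e⁺h + h e⁺) + iλe⁺, F = -(i/2)(e⁻h + h e⁻) + iλe⁻, where h, e⁺, e⁻ satisfy [h, e^±] = ±i e^± and e⁺e⁻ = e⁻e⁺ = 1, satisfy the sl(2,ℝ) commutation relations [E,F] = H, [H,E] = 2E, [H,F] = -2F. -/

import Mathlib

/-!
Writing `a = λ + i/2`, the relation `h e⁺ = e⁺ h + i e⁺` turns the symmetrised operators into
`E = i e⁺ (h + a)` and `F = -i e⁻ (h - a)`. Conjugation by `e^±` shifts `h` by a constant
(`e⁺ h e⁻ = h - i`, `e⁻ h e⁺ = h + i`), so `EF = (h - i + a)(h - a)` and `FE = (h + i - a)(h + a)`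
are polynomials in `h` whose difference is `-2ih = H`. Finally `E` and `F` are eigenvectors of
`ad h` with eigenvalues `±i`, since `h + a` commutes with `h`.
-/

section Commutator

variable {R A : Type*} [CommRing R] [Ring A] [Algebra R A]

theorem mul_mul_eq_sub_of_commutator_eq_smul {h u v : A} {c : R}
    (hc : h * u - u * h = c • u) (huv : u * v = 1) : u * h * v = h - c • 1 := by
  have hu : u * h = h * u - c • u := by rw [← hc]; abel
  rw [hu, sub_mul, mul_assoc, huv, smul_mul_assoc, huv, mul_one]

theorem mul_add_smul_one_mul_sub_commutator {h u v : A} {c : R}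
    (hu : h * u - u * h = c • u) (hv : h * v - v * h = -(c • v))
    (huv : u * v = 1) (hvu : v * u = 1) (a : R) :
    u * (h + a • (1 : A)) * (v * (h - a • 1)) - v * (h - a • 1) * (u * (h + a • 1)) =
      -((2 * c) • h) := by
  have huhv := mul_mul_eq_sub_of_commutator_eq_smul hu huv
  have hvhu := mul_mul_eq_sub_of_commutator_eq_smul (c := -c) (by rw [hv, neg_smul]) hvu
  have hleft : u * (h + a • (1 : A)) * v = h + (a - c) • 1 := by
    rw [mul_add, add_mul, huhv, mul_smul_comm, mul_one, smul_mul_assoc, huv]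
    module
  have hright : v * (h - a • (1 : A)) * u = h + (c - a) • 1 := by
    rw [mul_sub, sub_mul, hvhu, mul_smul_comm, mul_one, smul_mul_assoc, hvu]
    module
  rw [← mul_assoc, hleft, ← mul_assoc, hright]
  simp only [mul_add, add_mul, mul_sub, smul_mul_assoc, mul_smul_comm,
    one_mul, mul_one]
  module

theorem mul_add_mul_eq_smul_add_smul_of_commutator {h u : A} {c : R}
    (hc : h * u - u * h = c • u) : u * h + h * u = (2 : R) • (u * h) + c • u := by
  rw [← hc]
  module

theorem mul_commutator_eq_smul_of_commute {h x y : A} {c : R}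
    (hx : h * x - x * h = c • x) (hy : Commute h y) : h * (x * y) - x * y * h = c • (x * y) := by
  rw [mul_assoc x y h, ← hy.eq, ← mul_assoc, ← mul_assoc, ← sub_mul, hx, smul_mul_assoc]

theorem smul_commutator_eq_smul {h x : A} {c : R} (hx : h * x - x * h = c • x) (d : R) :
    h * (d • x) - d • x * h = c • (d • x) := by
  rw [mul_smul_comm, smul_mul_assoc, ← smul_sub, hx, smul_comm]

theorem smul_left_commutator_eq_smul {h x : A} {c : R} (hx : h * x - x * h = c • x) (d : R) :
    d • h * x - x * (d • h) = (d * c) • x := by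
  rw [smul_mul_assoc, mul_smul_comm, ← smul_sub, hx, smul_smul]

end Commutator

/-- In an associative ℂ-algebra with h, e⁺, e⁻ satisfying
[h,e⁺] = i e⁺, [h,e⁻] = -i e⁻, e⁺e⁻ = e⁻e⁺ = 1, the operators
H = -2ih, E = (i/2)(e⁺h + h e⁺) + iλe⁺, F = -(i/2)(e⁻h + h e⁻) + iλe⁻
satisfy [E,F] = H, [H,E] = 2E, [H,F] = -2F. -/
theorem stmt0 {A : Type*} [Ring A] [Algebra ℂ A] (h ep em : A) (lam : ℝ)
    (hcp : h * ep - ep * h = Complex.I • ep)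
    (hcm : h * em - em * h = -(Complex.I • em))
    (hinv1 : ep * em = 1) (hinv2 : em * ep = 1)
    (E F H : A)
    (hE : E = (Complex.I / 2) • (ep * h + h * ep) + (Complex.I * (lam : ℂ)) • ep)
    (hF : F = -((Complex.I / 2) • (em * h + h * em)) + (Complex.I * (lam : ℂ)) • em)
    (hH : H = -((2 * Complex.I) • h)) :
    E * F - F * E = H ∧ H * E - E * H = (2 : ℂ) • E ∧ H * F - F * H = -((2 : ℂ) • F) := by
  open Complex in
  have hE' : E = I • (ep * (h + ((lam : ℂ) + I / 2) • 1)) := by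
    rw [hE, mul_add_mul_eq_smul_add_smul_of_commutator hcp, mul_add, mul_smul_comm, mul_one]
    module
  have hF' : F = (-I) • (em * (h - ((lam : ℂ) + I / 2) • 1)) := by
    rw [hF, mul_add_mul_eq_smul_add_smul_of_commutator (c := -I) (by rw [hcm, neg_smul]),
      mul_sub, mul_smul_comm, mul_one]
    module
  have hcomm : ∀ s : ℂ, Commute h (h + s • 1) := fun s =>
    (Commute.refl h).add_right ((Commute.one_right h).smul_right s)
  have hEeig : h * E - E * h = I • E := by
    rw [hE']
    exact smul_commutator_eq_smul (mul_commutator_eq_smul_of_commute hcp (hcomm _)) I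
  have hFeig : h * F - F * h = (-I) • F := by
    rw [hF', sub_eq_add_neg h, ← neg_smul]
    exact smul_commutator_eq_smul
      (mul_commutator_eq_smul_of_commute (by rw [hcm, neg_smul]) (hcomm _)) (-I)
  rw [hH, ← neg_smul]
  refine ⟨?_, ?_, ?_⟩
  · rw [hE', hF', smul_mul_smul_comm, smul_mul_smul_comm, mul_comm (-I) I, ← smul_sub,
      mul_add_smul_one_mul_sub_commutator hcp hcm hinv1 hinv2,
      mul_neg, I_mul_I, neg_neg, one_smul, neg_smul]
  · rw [smul_left_commutator_eq_smul hEeig, neg_mul, mul_assoc, I_mul_I]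
    norm_num
  · rw [smul_left_commutator_eq_smul hFeig, neg_mul_neg, mul_assoc, I_mul_I, ← neg_smul]
    norm_num
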